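/- arXiv:1109.5684 — 4 statements merged into one kernel-verified Lean document; each statement's English description precedes it below -/
import Mathlib

section
/- Let m > 0, α > 0 and β ∈ (0,1). Suppose Z is a real-valued random variable with Z ≥ 0 almost surely such that for all t > 0, (1−α)·exp(−t/((1−β)m)) ≤ P(Z ≥ t) ≤ (1+α)·exp(−t/((1+β)m)). Then ∫₀^∞ |P(Z ≥ t) − exp(−t/m)| dt ≤ 2(α+β)·m. Equivalently, the L¹ Wasserstein distance between the law of Z and the exponential distribution with mean m is at most 2(α+β)·m. -/
/-!
For `t > 0` the exponential tail `exp (-t / m)` lies between `exp (-t / ((1 - β) m))` and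
`exp (-t / ((1 + β) m))`, hence in the same interval as `P(Z ≥ t)`, namely
`[(1 - α) exp (-t / ((1 - β) m)), (1 + α) exp (-t / ((1 + β) m))]`. The integrand is
therefore at most the width of that interval, whose integral over `(0, ∞)` is
`(1 + α)(1 + β) m - (1 - α)(1 - β) m = 2 (α + β) m`.
-/

open MeasureTheory Real Set

theorem exp_neg_div_eq_exp_neg_inv_mul (c : ℝ) :
    (fun x => exp (-x / c)) = fun x => exp (-c⁻¹ * x) := by
  ext x
  ring_nf

theorem integral_exp_neg_div_Ioi_zero {c : ℝ} (hc : 0 < c) :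
    ∫ x in Ioi (0 : ℝ), exp (-x / c) = c := by
  rw [exp_neg_div_eq_exp_neg_inv_mul, integral_exp_mul_Ioi (neg_lt_zero.2 (inv_pos.2 hc))]
  simp

theorem integrableOn_exp_neg_div_Ioi {c : ℝ} (hc : 0 < c) (a : ℝ) :
    IntegrableOn (fun x => exp (-x / c)) (Ioi a) := by
  simpa only [exp_neg_div_eq_exp_neg_inv_mul, neg_mul] using
    exp_neg_integrableOn_Ioi a (inv_pos.2 hc)

theorem exp_neg_div_le_exp_neg_div {t a b : ℝ} (ht : 0 ≤ t) (ha : 0 < a) (hab : a ≤ b) :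
    exp (-t / a) ≤ exp (-t / b) := by
  rw [exp_le_exp, neg_div, neg_div, neg_le_neg_iff]
  exact div_le_div_of_nonneg_left ht ha hab

theorem abs_sub_le_of_mem_Icc_one_sub_one_add {x y l u δ : ℝ} (hδ : 0 ≤ δ) (hl : 0 ≤ l)
    (hx : x ∈ Icc ((1 - δ) * l) ((1 + δ) * u)) (hy : y ∈ Icc l u) :
    |x - y| ≤ (1 + δ) * u - (1 - δ) * l := by
  rw [← dist_eq]
  refine dist_le_of_mem_Icc hx ⟨?_, ?_⟩ <;> nlinarith [hy.1, hy.2]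

theorem wasserstein_exp_approx_general {Ω : Type*} [MeasurableSpace Ω] (μ : Measure Ω)
    (Z : Ω → ℝ) (m α β : ℝ)
    (hm : 0 < m) (hα : 0 < α) (hβ : β ∈ Set.Ioo (0 : ℝ) 1)
    (hZ : ∀ t : ℝ, 0 < t →
      (1 - α) * Real.exp (-t / ((1 - β) * m)) ≤ (μ {ω | t ≤ Z ω}).toReal ∧
      (μ {ω | t ≤ Z ω}).toReal ≤ (1 + α) * Real.exp (-t / ((1 + β) * m))) :
    ∫ t in Set.Ioi (0 : ℝ), |(μ {ω | t ≤ Z ω}).toReal - Real.exp (-t / m)| ≤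
      2 * (α + β) * m := by
  obtain ⟨hβ0, hβ1⟩ := hβ
  have hm_sub : 0 < (1 - β) * m := mul_pos (sub_pos.2 hβ1) hm
  have hm_add : 0 < (1 + β) * m := by positivity
  have hi_add := (integrableOn_exp_neg_div_Ioi hm_add 0).const_mul (1 + α)
  have hi_sub := (integrableOn_exp_neg_div_Ioi hm_sub 0).const_mul (1 - α)
  have hpointwise : ∀ t ∈ Ioi (0 : ℝ), |(μ {ω | t ≤ Z ω}).toReal - exp (-t / m)| ≤
      (1 + α) * exp (-t / ((1 + β) * m)) - (1 - α) * exp (-t / ((1 - β) * m)) := fun t ht =>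
    abs_sub_le_of_mem_Icc_one_sub_one_add hα.le (exp_pos _).le (hZ t ht)
      ⟨exp_neg_div_le_exp_neg_div (le_of_lt ht) hm_sub (by nlinarith),
        exp_neg_div_le_exp_neg_div (le_of_lt ht) hm (by nlinarith)⟩
  calc _ ≤ ∫ t in Ioi (0 : ℝ),
        (1 + α) * exp (-t / ((1 + β) * m)) - (1 - α) * exp (-t / ((1 - β) * m)) :=
        integral_mono_of_nonneg (ae_of_all _ fun _ => abs_nonneg _) (hi_add.sub hi_sub)
          (ae_restrict_of_forall_mem measurableSet_Ioi hpointwise)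
    _ = 2 * (α + β) * m := by
      rw [integral_sub hi_add hi_sub, integral_const_mul, integral_const_mul,
        integral_exp_neg_div_Ioi_zero hm_add, integral_exp_neg_div_Ioi_zero hm_sub]
      ring

/-- Lemma: a random variable with distribution `Exp(m, α, β)` is within `L¹` Wasserstein
distance `2(α+β)m` of the exponential distribution with mean `m`, where the Wasserstein
distance is expressed as the integral of the absolute difference of tail probabilities. -/
theorem wasserstein_exp_approx {Ω : Type*} [MeasurableSpace Ω] (μ : Measure Ω)
    [IsProbabilityMeasure μ] (Z : Ω → ℝ) (m α β : ℝ)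
    (hm : 0 < m) (hα : 0 < α) (hβ : β ∈ Set.Ioo (0 : ℝ) 1)
    (hZ0 : ∀ᵐ ω ∂μ, 0 ≤ Z ω)
    (hZ : ∀ t : ℝ, 0 < t →
      (1 - α) * Real.exp (-t / ((1 - β) * m)) ≤ (μ {ω | t ≤ Z ω}).toReal ∧
      (μ {ω | t ≤ Z ω}).toReal ≤ (1 + α) * Real.exp (-t / ((1 + β) * m))) :
    ∫ t in Set.Ioi (0 : ℝ), |(μ {ω | t ≤ Z ω}).toReal - Real.exp (-t / m)| ≤
      2 * (α + β) * m :=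
  wasserstein_exp_approx_general μ Z m α β hm hα hβ hZ
end

section
/- Let Z, Z₋, Z₊ and W be real-valued random variables with finite first moments such that Z₋ is stochastically dominated by Z and Z is stochastically dominated by Z₊ (that is, P(Z₋ > t) ≤ P(Z > t) ≤ P(Z₊ > t) for all real t). Then d_W(Z, W) ≤ d_W(Z₋, W) + d_W(Z₊, W). -/
/-!
Domination of the strict tails `P(X > t)` passes to the closed tails `P(X ≥ t)` at every
continuity point of the larger survival function, hence for almost every `t`. So almost
everywhere the survival function of `Z` lies between those of `Z₋` and `Z₊`, and
`|b - d| ≤ |a - d| + |c - d|` whenever `a ≤ b ≤ c`; integrating this bound gives the claim.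
The right-hand integrands are integrable: on `(0, ∞)` a survival function is integrable by the
layer cake formula, and on `(-∞, 0]` its distance to `1` is at most `P(X ≤ t) = P(-X ≥ -t)`.
-/

open MeasureTheory Set Filter Topology

lemma abs_sub_le_abs_sub_add_abs_sub_of_le_of_le {α : Type*} [AddCommGroup α] [LinearOrder α]
    [IsOrderedAddMonoid α] {a b c d : α} (hab : a ≤ b) (hbc : b ≤ c) :
    |b - d| ≤ |a - d| + |c - d| :=
  (abs_le_max_abs_abs (sub_le_sub_right hab d) (sub_le_sub_right hbc d)).trans
    (max_le_add_of_nonneg (abs_nonneg _) (abs_nonneg _))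

lemma Antitone.ae_le_of_forall_lt_le {μ : Measure ℝ} [NullSingletonClass μ] {f g : ℝ → ℝ}
    (hg : Antitone g) (h : ∀ s t, s < t → f t ≤ g s) : ∀ᵐ t ∂μ, f t ≤ g t := by
  filter_upwards [hg.countable_not_continuousAt.ae_notMem μ] with t ht
  have hcont : ContinuousAt g t := not_not.1 ht
  exact _root_.ge_of_tendsto (hcont.tendsto.mono_left (nhdsWithin_le_nhds (s := Iio t)))
    (eventually_nhdsWithin_of_forall fun s hs => h s t hs)

section SurvivalFunction

variable {Ω : Type*} [MeasurableSpace Ω] {μ : Measure Ω} {X : Ω → ℝ}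

lemma antitone_measureReal_le [IsFiniteMeasure μ] :
    Antitone fun t => μ.real {ω | t ≤ X ω} :=
  fun _ _ hst => measureReal_mono fun _ hω => hst.trans hω

lemma integrableOn_Ioi_measureReal_le [IsFiniteMeasure μ] (hX : Integrable X μ) :
    IntegrableOn (fun t => μ.real {ω | t ≤ X ω}) (Ioi 0) := by
  refine ⟨antitone_measureReal_le.measurable.aestronglyMeasurable, ?_⟩
  have hpos : Integrable (fun ω => max (X ω) 0) μ := hX.pos_part
  have htail : ∫⁻ t in Ioi 0, μ {ω | t ≤ X ω} = ∫⁻ ω, ENNReal.ofReal (max (X ω) 0) ∂μ := by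
    rw [lintegral_eq_lintegral_meas_le μ (ae_of_all _ fun ω => le_max_right _ 0)
      hpos.aemeasurable]
    refine setLIntegral_congr_fun measurableSet_Ioi fun t (ht : 0 < t) => ?_
    simp only [le_max_iff, ht.not_ge, or_false]
  calc ∫⁻ t in Ioi 0, ‖μ.real {ω | t ≤ X ω}‖ₑ
      = ∫⁻ t in Ioi 0, μ {ω | t ≤ X ω} := by
        simp only [measureReal_def, Real.enorm_toReal (measure_ne_top _ _)]
    _ < ⊤ := htail ▸ hpos.lintegral_lt_top

lemma integrableOn_Iic_measureReal_le_sub_one [IsProbabilityMeasure μ] (hX : Integrable X μ) :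
    IntegrableOn (fun t => μ.real {ω | t ≤ X ω} - 1) (Iic 0) := by
  have hlower : IntegrableOn (fun t => μ.real {ω | X ω ≤ t}) (Iic 0) := by
    rw [integrableOn_Iic_iff_integrableOn_Iio]
    have hneg := integrableOn_Ioi_measureReal_le hX.neg
    rw [← neg_zero] at hneg
    simpa only [Pi.neg_apply, neg_le_neg_iff] using hneg.comp_neg_Iio
  refine hlower.mono' ((antitone_measureReal_le.measurable.sub_const 1).aestronglyMeasurable)
    (ae_of_all _ fun t => ?_)
  have hcover : 1 ≤ μ.real {ω | t ≤ X ω} + μ.real {ω | X ω ≤ t} := by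
    calc (1 : ℝ) = μ.real ({ω | t ≤ X ω} ∪ {ω | X ω ≤ t}) := by
          rw [← probReal_univ (μ := μ)]
          congr 1
          ext ω
          simp [le_total]
      _ ≤ _ := measureReal_union_le _ _
  rw [Real.norm_eq_abs, abs_of_nonpos (sub_nonpos.2 measureReal_le_one)]
  linarith

end SurvivalFunction

lemma integrable_measureReal_le_sub_measureReal_le {Ω Ω' : Type*} [MeasurableSpace Ω]
    [MeasurableSpace Ω'] {μ : Measure Ω} {ν : Measure Ω'} [IsProbabilityMeasure μ]
    [IsProbabilityMeasure ν] {X : Ω → ℝ} {Y : Ω' → ℝ} (hX : Integrable X μ)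
    (hY : Integrable Y ν) :
    Integrable fun t => μ.real {ω | t ≤ X ω} - ν.real {ω | t ≤ Y ω} := by
  rw [← integrableOn_univ, ← Iic_union_Ioi (a := 0)]
  refine IntegrableOn.union ?_
    ((integrableOn_Ioi_measureReal_le hX).sub (integrableOn_Ioi_measureReal_le hY))
  exact ((integrableOn_Iic_measureReal_le_sub_one hX).sub
    (integrableOn_Iic_measureReal_le_sub_one hY)).congr_fun
      (fun t _ => sub_sub_sub_cancel_right _ _ _) measurableSet_Iic

lemma ae_measureReal_le_le_of_forall_measure_lt_le {Ω Ω' : Type*} [MeasurableSpace Ω]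
    [MeasurableSpace Ω'] {μ : Measure Ω} {ν : Measure Ω'} [IsFiniteMeasure ν] {X : Ω → ℝ}
    {Y : Ω' → ℝ} {ρ : Measure ℝ} [NullSingletonClass ρ]
    (hdom : ∀ t, μ {ω | t < X ω} ≤ ν {ω | t < Y ω}) :
    ∀ᵐ t ∂ρ, μ.real {ω | t ≤ X ω} ≤ ν.real {ω | t ≤ Y ω} := by
  refine (antitone_measureReal_le).ae_le_of_forall_lt_le fun s t hst => ?_
  refine ENNReal.toReal_mono (measure_ne_top _ _) ?_
  calc μ {ω | t ≤ X ω} ≤ μ {ω | s < X ω} := measure_mono fun _ hω => hst.trans_le hω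
    _ ≤ ν {ω | s < Y ω} := hdom s
    _ ≤ ν {ω | s ≤ Y ω} := measure_mono fun _ (hω : s < Y _) => hω.le

theorem wasserstein_sandwich_lemma_general
    {Ω₁ Ω₂ Ω₃ Ω₄ : Type*}
    [MeasurableSpace Ω₁] [MeasurableSpace Ω₂] [MeasurableSpace Ω₃] [MeasurableSpace Ω₄]
    (μ₁ : Measure Ω₁) (μ₂ : Measure Ω₂) (μ₃ : Measure Ω₃) (μ₄ : Measure Ω₄)
    [IsProbabilityMeasure μ₁] [IsProbabilityMeasure μ₂] [IsProbabilityMeasure μ₃]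
    [IsProbabilityMeasure μ₄]
    (Z : Ω₁ → ℝ) (Zm : Ω₂ → ℝ) (Zp : Ω₃ → ℝ) (W : Ω₄ → ℝ)
    (hZm : Integrable Zm μ₂) (hZp : Integrable Zp μ₃)
    (hW : Integrable W μ₄)
    (hdom₁ : ∀ t : ℝ, μ₂ {ω | t < Zm ω} ≤ μ₁ {ω | t < Z ω})
    (hdom₂ : ∀ t : ℝ, μ₁ {ω | t < Z ω} ≤ μ₃ {ω | t < Zp ω}) :
    ∫ t : ℝ, |(μ₁ {ω | t ≤ Z ω}).toReal - (μ₄ {ω | t ≤ W ω}).toReal| ≤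
      (∫ t : ℝ, |(μ₂ {ω | t ≤ Zm ω}).toReal - (μ₄ {ω | t ≤ W ω}).toReal|) +
      ∫ t : ℝ, |(μ₃ {ω | t ≤ Zp ω}).toReal - (μ₄ {ω | t ≤ W ω}).toReal| := by
  simp only [← measureReal_def]
  have hm := (integrable_measureReal_le_sub_measureReal_le hZm hW).abs
  have hp := (integrable_measureReal_le_sub_measureReal_le hZp hW).abs
  rw [← integral_add hm hp]
  refine integral_mono_of_nonneg (ae_of_all _ fun t => abs_nonneg _) (hm.add hp) ?_
  filter_upwards [ae_measureReal_le_le_of_forall_measure_lt_le hdom₁,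
    ae_measureReal_le_le_of_forall_measure_lt_le hdom₂] with t hlower hupper
  exact abs_sub_le_abs_sub_add_abs_sub_of_le_of_le hlower hupper

/-- Sandwich Lemma for Wasserstein distance (Lemma 2.4): if `Z₋ ≼_d Z ≼_d Z₊` (stochastic
domination), then `d_W(Z, W) ≤ d_W(Z₋, W) + d_W(Z₊, W)`, where
`d_W(X, Y) = ∫_ℝ |P(X ≥ t) − P(Y ≥ t)| dt`. The random variables need not be defined on a
common probability space. -/
theorem wasserstein_sandwich_lemma
    {Ω₁ Ω₂ Ω₃ Ω₄ : Type*}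
    [MeasurableSpace Ω₁] [MeasurableSpace Ω₂] [MeasurableSpace Ω₃] [MeasurableSpace Ω₄]
    (μ₁ : Measure Ω₁) (μ₂ : Measure Ω₂) (μ₃ : Measure Ω₃) (μ₄ : Measure Ω₄)
    [IsProbabilityMeasure μ₁] [IsProbabilityMeasure μ₂] [IsProbabilityMeasure μ₃]
    [IsProbabilityMeasure μ₄]
    (Z : Ω₁ → ℝ) (Zm : Ω₂ → ℝ) (Zp : Ω₃ → ℝ) (W : Ω₄ → ℝ)
    (hZ : Integrable Z μ₁) (hZm : Integrable Zm μ₂) (hZp : Integrable Zp μ₃)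
    (hW : Integrable W μ₄)
    (hdom₁ : ∀ t : ℝ, μ₂ {ω | t < Zm ω} ≤ μ₁ {ω | t < Z ω})
    (hdom₂ : ∀ t : ℝ, μ₁ {ω | t < Z ω} ≤ μ₃ {ω | t < Zp ω}) :
    ∫ t : ℝ, |(μ₁ {ω | t ≤ Z ω}).toReal - (μ₄ {ω | t ≤ W ω}).toReal| ≤
      (∫ t : ℝ, |(μ₂ {ω | t ≤ Zm ω}).toReal - (μ₄ {ω | t ≤ W ω}).toReal|) +
      ∫ t : ℝ, |(μ₃ {ω | t ≤ Zp ω}).toReal - (μ₄ {ω | t ≤ W ω}).toReal| :=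
  wasserstein_sandwich_lemma_general μ₁ μ₂ μ₃ μ₄ Z Zm Zp W hZm hZp hW hdom₁ hdom₂
end

section
/- Let (Ω, F, μ) be a standard Borel probability space, and let W₁, W₂, Z₁, Z₂ be real-valued integrable random variables on Ω. Assume Z₁ and Z₂ are independent, and W₁ is measurable with respect to a sub-σ-algebra G ⊆ F. Let ω ↦ Law(W₂ | G)(ω) denote a regular conditional distribution of W₂ given G (for instance, the pushforward under W₂ of the conditional expectation kernel of μ given G). Then d_W(Law(W₁+W₂), Law(Z₁+Z₂)) ≤ d_W(Law(W₁), Law(Z₁)) + E[ d_W( Law(W₂ | G), Law(Z₂) ) ], where the expectation is over ω ∈ Ω. -/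
/-!
All estimates are made on the survival functions `t ↦ λ((t, ∞))`, with the `ℝ≥0∞`-valued
version `edW` of `dW`, for which Tonelli applies without integrability side conditions.
The core estimate is a mixing bound: if the survival functions of `p` and `q` are the
`μ`-averages over `ω` of those of `P ω` and `Q ω` shifted by `X ω`, then
`edW p q ≤ ∫ edW (P ω) (Q ω) dμ` (move `|·|` inside, swap the integrals, and use translation
invariance of Lebesgue measure).

Compare `Law(W₁ + W₂)` with the hybrid `Law(W₁) ∗ Law(Z₂)`: as `W₁` is `G`-measurable,
disintegrating `μ` along the conditional expectation kernel writes the survival function of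
`W₁ + W₂` as the average of those of `Law(W₂ | G)(ω)` shifted by `W₁ ω`, and the mixing bound
gives the expectation term. By independence `Law(Z₁ + Z₂) = Law(Z₁) ∗ Law(Z₂)`, and the mixing
bound with the shift averaged over `Law(Z₂)` compares the hybrid with it at cost
`d_W(Law(W₁), Law(Z₁))`. First moments (`edW p q ≤ E|p| + E|q|`, from
`edW (δ x) (δ y) = |x - y|`) make everything finite, so the bound passes back to `dW`.
-/

open MeasureTheory ProbabilityTheory

/-- The `L¹` Wasserstein distance between two laws on `ℝ`, expressed as the integral over
`t ∈ ℝ` of the absolute difference of the tail probabilities of `(t, ∞)`. -/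
noncomputable def dW (p q : Measure ℝ) : ℝ :=
  ∫ t : ℝ, |(p (Set.Ioi t)).toReal - (q (Set.Ioi t)).toReal|


open Set
open scoped ENNReal

noncomputable def survival (p : Measure ℝ) (t : ℝ) : ℝ := (p (Ioi t)).toReal

noncomputable def edW (p q : Measure ℝ) : ℝ≥0∞ := ∫⁻ t, ‖survival p t - survival q t‖ₑ

lemma measurable_measure_Ioi (p : Measure ℝ) : Measurable fun t => p (Ioi t) :=
  Antitone.measurable fun _ _ h => measure_mono (Ioi_subset_Ioi h)

@[fun_prop]
lemma measurable_survival (p : Measure ℝ) : Measurable (survival p) :=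
  (measurable_measure_Ioi p).ennreal_toReal

lemma dW_eq_toReal_edW (p q : Measure ℝ) : dW p q = (edW p q).toReal :=
  integral_norm_eq_lintegral_enorm
    ((measurable_survival p).sub (measurable_survival q)).aestronglyMeasurable

lemma edW_comm (p q : Measure ℝ) : edW p q = edW q p := by
  simp only [edW, enorm_sub_rev]

lemma edW_triangle (p q r : Measure ℝ) : edW p r ≤ edW p q + edW q r := by
  calc edW p r
      ≤ ∫⁻ t, (‖survival p t - survival q t‖ₑ + ‖survival q t - survival r t‖ₑ) :=
        lintegral_mono fun t => by
          simpa only [sub_add_sub_cancel] using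
            enorm_add_le (survival p t - survival q t) (survival q t - survival r t)
    _ = edW p q + edW q r :=
        lintegral_add_left ((measurable_survival p).sub (measurable_survival q)).enorm _

lemma survival_dirac (x t : ℝ) : survival (Measure.dirac x) t = (Ioi t).indicator 1 x := by
  rw [survival, Measure.dirac_apply' x measurableSet_Ioi]
  by_cases h : x ∈ Ioi t <;> simp [h]

lemma edW_dirac_dirac (x y : ℝ) :
    edW (Measure.dirac x) (Measure.dirac y) = edist x y := by
  wlog hxy : x ≤ y generalizing x y
  · rw [edW_comm, edist_comm]
    exact this y x (le_of_not_ge hxy)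
  have hind : ∀ t, ‖survival (Measure.dirac x) t - survival (Measure.dirac y) t‖ₑ
      = (Ico x y).indicator 1 t := by
    intro t
    by_cases h1 : t < x
    · simp [survival_dirac, h1, h1.trans_le hxy]
    · by_cases h2 : t < y <;> simp [survival_dirac, indicator_apply, h1, h2]
  rw [edW, lintegral_congr hind, lintegral_indicator_one measurableSet_Ico, Real.volume_Ico,
    edist_dist, Real.dist_eq, abs_sub_comm, abs_of_nonneg (sub_nonneg.2 hxy)]

lemma measurable_measure_Ioi_kernel {α : Type*} [MeasurableSpace α] (η : Kernel α ℝ)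
    [IsSFiniteKernel η] : Measurable fun p : α × ℝ => η p.1 (Ioi p.2) :=
  Kernel.measurable_kernel_prodMk_left (κ := η.comap Prod.fst measurable_fst)
    (measurableSet_lt measurable_fst.snd measurable_snd)

lemma measurable_survival_kernel {α : Type*} [MeasurableSpace α] (η : Kernel α ℝ)
    [IsSFiniteKernel η] : Measurable fun p : α × ℝ => survival (η p.1) p.2 :=
  (measurable_measure_Ioi_kernel η).ennreal_toReal

lemma measurable_edW_kernel {α : Type*} [MeasurableSpace α] (P Q : Kernel α ℝ)
    [IsSFiniteKernel P] [IsSFiniteKernel Q] : Measurable fun a => edW (P a) (Q a) :=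
  Measurable.lintegral_prod_right'
    ((measurable_survival_kernel P).sub (measurable_survival_kernel Q)).enorm

lemma integrable_survival_kernel {Ω : Type*} [MeasurableSpace Ω] {μ : Measure Ω}
    [IsFiniteMeasure μ] (η : Kernel Ω ℝ) [IsFiniteKernel η] {X : Ω → ℝ} (hX : Measurable X)
    (t : ℝ) : Integrable (fun ω => survival (η ω) (t - X ω)) μ := by
  refine Integrable.of_bound ((measurable_survival_kernel η).comp
    (measurable_id.prodMk (measurable_const.sub hX))).aestronglyMeasurable
    η.bound.toReal (ae_of_all _ fun ω => ?_)
  rw [survival, Real.norm_of_nonneg ENNReal.toReal_nonneg]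
  exact ENNReal.toReal_mono (Kernel.bound_ne_top η) (Kernel.measure_le_bound η ω _)

theorem edW_le_lintegral_edW_of_survival_eq_integral {Ω : Type*} [MeasurableSpace Ω]
    {μ : Measure Ω} [IsFiniteMeasure μ] {p q : Measure ℝ} (P Q : Kernel Ω ℝ) [IsFiniteKernel P]
    [IsFiniteKernel Q] {X : Ω → ℝ} (hX : Measurable X)
    (hp : ∀ t, survival p t = ∫ ω, survival (P ω) (t - X ω) ∂μ)
    (hq : ∀ t, survival q t = ∫ ω, survival (Q ω) (t - X ω) ∂μ) :
    edW p q ≤ ∫⁻ ω, edW (P ω) (Q ω) ∂μ := by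
  set D : ℝ → Ω → ℝ := fun t ω => survival (P ω) (t - X ω) - survival (Q ω) (t - X ω)
  have hD : Measurable (Function.uncurry D) := by
    have hshift : Measurable fun x : ℝ × Ω => (x.2, x.1 - X x.2) :=
      measurable_snd.prodMk (measurable_fst.sub (hX.comp measurable_snd))
    exact ((measurable_survival_kernel P).comp hshift).sub
      ((measurable_survival_kernel Q).comp hshift)
  calc edW p q = ∫⁻ t, ‖∫ ω, D t ω ∂μ‖ₑ := by
        simp only [edW, hp, hq, D, ← integral_sub (integrable_survival_kernel P hX _)
          (integrable_survival_kernel Q hX _)]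
    _ ≤ ∫⁻ t, ∫⁻ ω, ‖D t ω‖ₑ ∂μ := lintegral_mono fun t => enorm_integral_le_lintegral_enorm _
    _ = ∫⁻ ω, (∫⁻ t, ‖D t ω‖ₑ) ∂μ := lintegral_lintegral_swap hD.enorm.aemeasurable
    _ = ∫⁻ ω, edW (P ω) (Q ω) ∂μ := by
        simp only [D, edW]
        exact lintegral_congr fun ω => lintegral_sub_right_eq_self
          (fun s => ‖survival (P ω) s - survival (Q ω) s‖ₑ) (X ω)

lemma edW_dirac_zero_le (p : Measure ℝ) [IsProbabilityMeasure p] :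
    edW p (Measure.dirac 0) ≤ ∫⁻ x, ‖x‖ₑ ∂p := by
  refine (edW_le_lintegral_edW_of_survival_eq_integral (μ := p) (p := p) (q := Measure.dirac 0)
    (Kernel.deterministic id measurable_id) (Kernel.const ℝ (Measure.dirac 0))
    (X := fun _ => 0) measurable_const (fun t => ?_) (fun t => by simp)).trans_eq ?_
  · simp only [Kernel.deterministic_apply, id, sub_zero, survival_dirac]
    rw [integral_indicator_one measurableSet_Ioi]; rfl
  · simp [Kernel.deterministic_apply, edW_dirac_dirac]

lemma edW_le_lintegral_enorm_add (p q : Measure ℝ) [IsProbabilityMeasure p]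
    [IsProbabilityMeasure q] : edW p q ≤ ∫⁻ x, ‖x‖ₑ ∂p + ∫⁻ x, ‖x‖ₑ ∂q := by
  calc edW p q ≤ edW p (Measure.dirac 0) + edW (Measure.dirac 0) q := edW_triangle _ _ _
    _ ≤ _ := by
      rw [edW_comm (Measure.dirac 0)]
      exact add_le_add (edW_dirac_zero_le p) (edW_dirac_zero_le q)

lemma survival_conv (ρ ν : Measure ℝ) [IsFiniteMeasure ρ] [IsFiniteMeasure ν] (t : ℝ) :
    survival (ρ ∗ ν) t = ∫ x, survival ν (t - x) ∂ρ := by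
  have hS : MeasurableSet ((fun z : ℝ × ℝ => z.1 + z.2) ⁻¹' Ioi t) :=
    measurable_add measurableSet_Ioi
  have hsec : ∀ x : ℝ, Prod.mk x ⁻¹' ((fun z : ℝ × ℝ => z.1 + z.2) ⁻¹' Ioi t) = Ioi (t - x) := by
    intro x; ext y; simp [sub_lt_iff_lt_add']
  rw [survival, Measure.conv, Measure.map_apply measurable_add measurableSet_Ioi,
    Measure.prod_apply hS]
  simp_rw [hsec]
  exact (integral_toReal ((measurable_measure_Ioi ν).comp
    (measurable_const.sub measurable_id)).aemeasurable
    (ae_of_all _ fun x => measure_lt_top _ _)).symm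

lemma edW_conv_le (ρ₁ ρ₂ ν : Measure ℝ) [IsFiniteMeasure ρ₁] [IsFiniteMeasure ρ₂]
    [IsProbabilityMeasure ν] : edW (ρ₁ ∗ ν) (ρ₂ ∗ ν) ≤ edW ρ₁ ρ₂ := by
  refine (edW_le_lintegral_edW_of_survival_eq_integral (μ := ν) (p := ρ₁ ∗ ν) (q := ρ₂ ∗ ν)
    (Kernel.const ℝ ρ₁) (Kernel.const ℝ ρ₂) measurable_id (fun t => ?_) (fun t => ?_)).trans_eq ?_
  · rw [Measure.conv_comm, survival_conv]; rfl
  · rw [Measure.conv_comm, survival_conv]; rfl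
  · simp

lemma MeasureTheory.Integrable.lintegral_enorm_map_lt_top {Ω : Type*} [MeasurableSpace Ω]
    {μ : Measure Ω} {X : Ω → ℝ} (hX : Integrable X μ) : ∫⁻ x, ‖x‖ₑ ∂μ.map X < ∞ := by
  rw [lintegral_map' measurable_enorm.aemeasurable hX.aemeasurable]
  exact hX.hasFiniteIntegral

section CondLaw

variable {Ω : Type*} {G : MeasurableSpace Ω} [mΩ : MeasurableSpace Ω] [StandardBorelSpace Ω]
  {μ : Measure Ω} [IsFiniteMeasure μ]

lemma lintegral_condExpKernel_diag (hG : G ≤ mΩ) {f : Ω × Ω → ℝ≥0∞}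
    (hf : Measurable[G.prod mΩ] f) :
    ∫⁻ ω, (∫⁻ y, f (ω, y) ∂condExpKernel μ G ω) ∂μ = ∫⁻ ω, f (ω, ω) ∂μ := by
  rw [← lintegral_trim hG (Measurable.lintegral_kernel_prod_right (f := fun ω y => f (ω, y)) hf),
    ← Measure.lintegral_compProd hf, compProd_trim_condExpKernel]
  exact @lintegral_map _ _ mΩ (G.prod mΩ) μ f _ hf ((measurable_id'' hG).prodMk measurable_id)

/-- `Law(W | G)`, as a kernel measurable for the ambient σ-algebra. -/
noncomputable def condLaw (μ : Measure Ω) [IsFiniteMeasure μ] (hG : G ≤ mΩ) (W : Ω → ℝ) :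
    Kernel Ω ℝ :=
  ((condExpKernel μ G).map W).comap id (measurable_id'' hG)

lemma condLaw_apply (hG : G ≤ mΩ) {W : Ω → ℝ} (hW : Measurable W) (ω : Ω) :
    condLaw μ hG W ω = (condExpKernel μ G ω).map W := by
  rw [condLaw, Kernel.comap_apply]
  exact Kernel.map_apply (mα := G) _ hW ω

lemma isMarkovKernel_condLaw (hG : G ≤ mΩ) {W : Ω → ℝ} (hW : Measurable W) :
    IsMarkovKernel (condLaw μ hG W) := by
  have := Kernel.IsMarkovKernel.map (mα := G) (condExpKernel μ G) hW
  rw [condLaw]; infer_instance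

lemma lintegral_lintegral_condLaw (hG : G ≤ mΩ) {W : Ω → ℝ} (hW : Measurable W)
    {f : ℝ → ℝ≥0∞} (hf : Measurable f) :
    ∫⁻ ω, (∫⁻ x, f x ∂condLaw μ hG W ω) ∂μ = ∫⁻ ω, f (W ω) ∂μ := by
  simp_rw [condLaw_apply hG hW, lintegral_map hf hW]
  exact lintegral_condExpKernel_diag hG ((hf.comp hW).comp measurable_snd)

lemma survival_map_add_eq_integral_condLaw (hG : G ≤ mΩ) {W₁ W₂ : Ω → ℝ}
    (hW₁ : Measurable[G] W₁) (hW₂ : Measurable W₂) (t : ℝ) :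
    survival (μ.map fun ω => W₁ ω + W₂ ω) t
      = ∫ ω, survival (condLaw μ hG W₂ ω) (t - W₁ ω) ∂μ := by
  have hW₁' : Measurable W₁ := hW₁.mono hG le_rfl
  have := isMarkovKernel_condLaw (μ := μ) hG hW₂
  set f : Ω × Ω → ℝ≥0∞ := fun z => (Ioi t).indicator 1 (W₁ z.1 + W₂ z.2)
  have hf : Measurable[G.prod mΩ] f :=
    (measurable_one.indicator measurableSet_Ioi).comp
      ((hW₁.comp measurable_fst).add (hW₂.comp measurable_snd))
  have hsection : ∀ ω, ∫⁻ y, f (ω, y) ∂condExpKernel μ G ω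
      = condLaw μ hG W₂ ω (Ioi (t - W₁ ω)) := by
    intro ω
    rw [condLaw_apply hG hW₂, Measure.map_apply hW₂ measurableSet_Ioi,
      ← lintegral_indicator_one (hW₂ measurableSet_Ioi)]
    congr 1 with y
    by_cases h : t < W₁ ω + W₂ y <;> simp [f, h, sub_lt_iff_lt_add']
  have hlaw : (μ.map fun ω => W₁ ω + W₂ ω) (Ioi t) = ∫⁻ ω, f (ω, ω) ∂μ := by
    rw [← lintegral_indicator_one measurableSet_Ioi,
      lintegral_map (measurable_one.indicator measurableSet_Ioi) (hW₁'.fun_add hW₂)]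
  have hmeas : Measurable fun ω => condLaw μ hG W₂ ω (Ioi (t - W₁ ω)) :=
    (measurable_measure_Ioi_kernel (condLaw μ hG W₂)).comp
      (measurable_id.prodMk (measurable_const.sub hW₁'))
  rw [survival, hlaw, ← lintegral_condExpKernel_diag hG hf, lintegral_congr hsection,
    ← integral_toReal hmeas.aemeasurable (ae_of_all _ fun ω => measure_lt_top _ _)]
  rfl

theorem edW_map_add_le_lintegral_edW_condLaw (hG : G ≤ mΩ) {W₁ W₂ : Ω → ℝ}
    (hW₁ : Measurable[G] W₁) (hW₂ : Measurable W₂) (ν : Measure ℝ) [IsFiniteMeasure ν] :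
    edW (μ.map fun ω => W₁ ω + W₂ ω) (μ.map W₁ ∗ ν) ≤ ∫⁻ ω, edW (condLaw μ hG W₂ ω) ν ∂μ := by
  have hW₁' : Measurable W₁ := hW₁.mono hG le_rfl
  have := isMarkovKernel_condLaw (μ := μ) hG hW₂
  refine (edW_le_lintegral_edW_of_survival_eq_integral (condLaw μ hG W₂) (Kernel.const Ω ν) hW₁'
    (survival_map_add_eq_integral_condLaw hG hW₁ hW₂) (fun t => ?_)).trans_eq (by simp)
  rw [survival_conv, integral_map hW₁'.aemeasurable
    (by fun_prop : Measurable fun x => survival ν (t - x)).aestronglyMeasurable]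
  rfl

lemma lintegral_edW_condLaw_lt_top [IsProbabilityMeasure μ] (hG : G ≤ mΩ) {W : Ω → ℝ}
    (hW : Measurable W) (hWi : Integrable W μ) (ν : Measure ℝ) [IsProbabilityMeasure ν]
    (hν : ∫⁻ x, ‖x‖ₑ ∂ν < ∞) : ∫⁻ ω, edW (condLaw μ hG W ω) ν ∂μ < ∞ := by
  have := isMarkovKernel_condLaw (μ := μ) hG hW
  calc ∫⁻ ω, edW (condLaw μ hG W ω) ν ∂μ
      ≤ ∫⁻ ω, (∫⁻ x, ‖x‖ₑ ∂condLaw μ hG W ω + ∫⁻ x, ‖x‖ₑ ∂ν) ∂μ :=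
        lintegral_mono fun ω => edW_le_lintegral_enorm_add _ _
    _ = ∫⁻ ω, ‖W ω‖ₑ ∂μ + ∫⁻ x, ‖x‖ₑ ∂ν := by
        rw [lintegral_add_right _ measurable_const, lintegral_lintegral_condLaw hG hW
          measurable_enorm, lintegral_const, measure_univ, mul_one]
    _ < ∞ := ENNReal.add_lt_top.2 ⟨hWi.hasFiniteIntegral, hν⟩

lemma integral_dW_map_condExpKernel (hG : G ≤ mΩ) {W : Ω → ℝ} (hW : Measurable W)
    (ν : Measure ℝ) [IsFiniteMeasure ν] (hfin : ∫⁻ ω, edW (condLaw μ hG W ω) ν ∂μ ≠ ∞) :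
    ∫ ω, dW ((condExpKernel μ G ω).map W) ν ∂μ
      = (∫⁻ ω, edW (condLaw μ hG W ω) ν ∂μ).toReal := by
  have := isMarkovKernel_condLaw (μ := μ) hG hW
  have hmeas := measurable_edW_kernel (condLaw μ hG W) (Kernel.const Ω ν)
  simp_rw [dW_eq_toReal_edW, ← condLaw_apply hG hW]
  exact integral_toReal hmeas.aemeasurable (ae_lt_top hmeas hfin)

end CondLaw

theorem wasserstein_conditional_lemma_general {Ω : Type*} [mΩ : MeasurableSpace Ω]
    [StandardBorelSpace Ω] (μ : Measure Ω) [IsProbabilityMeasure μ]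
    (W₁ W₂ Z₁ Z₂ : Ω → ℝ)
    (hW₂m : Measurable W₂)
    (hW₁ : Integrable W₁ μ) (hW₂ : Integrable W₂ μ)
    (hZ₁ : Integrable Z₁ μ) (hZ₂ : Integrable Z₂ μ)
    (hindep : IndepFun Z₁ Z₂ μ)
    (G : MeasurableSpace Ω) (hG : G ≤ mΩ)
    (hW₁G : Measurable[G] W₁) :
    dW (@Measure.map Ω ℝ mΩ _ (fun ω => W₁ ω + W₂ ω) μ)
        (@Measure.map Ω ℝ mΩ _ (fun ω => Z₁ ω + Z₂ ω) μ) ≤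
      dW (@Measure.map Ω ℝ mΩ _ W₁ μ) (@Measure.map Ω ℝ mΩ _ Z₁ μ) +
        ∫ ω, dW (@Measure.map Ω ℝ mΩ _ W₂ (condExpKernel (mΩ := mΩ) μ G ω))
          (@Measure.map Ω ℝ mΩ _ Z₂ μ) ∂μ := by
  -- `G` is a local instance too; make instance search find `mΩ` again.
  let _ : MeasurableSpace Ω := mΩ
  set ν := μ.map Z₂
  have : IsProbabilityMeasure ν := Measure.isProbabilityMeasure_map hZ₂.aemeasurable
  have : IsProbabilityMeasure (μ.map W₁) := Measure.isProbabilityMeasure_map hW₁.aemeasurable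
  have : IsProbabilityMeasure (μ.map Z₁) := Measure.isProbabilityMeasure_map hZ₁.aemeasurable
  have hZsum : (μ.map fun ω => Z₁ ω + Z₂ ω) = μ.map Z₁ ∗ ν :=
    hindep.map_add_eq_map_conv_map₀ (μ := μ) hZ₁.aemeasurable hZ₂.aemeasurable
  have hA := edW_map_add_le_lintegral_edW_condLaw (μ := μ) hG hW₁G hW₂m ν
  have hB := edW_conv_le (μ.map W₁) (μ.map Z₁) ν
  have hA_fin := lintegral_edW_condLaw_lt_top hG hW₂m hW₂ ν hZ₂.lintegral_enorm_map_lt_top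
  have hB_fin : edW (μ.map W₁) (μ.map Z₁) < ∞ := (edW_le_lintegral_enorm_add _ _).trans_lt
    (ENNReal.add_lt_top.2 ⟨hW₁.lintegral_enorm_map_lt_top, hZ₁.lintegral_enorm_map_lt_top⟩)
  rw [dW_eq_toReal_edW, dW_eq_toReal_edW, integral_dW_map_condExpKernel hG hW₂m ν hA_fin.ne,
    hZsum, ← ENNReal.toReal_add hB_fin.ne hA_fin.ne]
  refine ENNReal.toReal_mono (ENNReal.add_lt_top.2 ⟨hB_fin, hA_fin⟩).ne ?_
  calc edW (μ.map fun ω => W₁ ω + W₂ ω) (μ.map Z₁ ∗ ν)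
      ≤ edW (μ.map fun ω => W₁ ω + W₂ ω) (μ.map W₁ ∗ ν) + edW (μ.map W₁ ∗ ν) (μ.map Z₁ ∗ ν) :=
        edW_triangle _ _ _
    _ ≤ _ := by rw [add_comm]; exact add_le_add hB hA

/-- Conditional Lemma for Wasserstein distance (Lemma 2.5): on a standard Borel probability
space, if `Z₁, Z₂` are independent and `W₁` is measurable with respect to a sub-σ-algebra `G`,
then `d_W(Law(W₁+W₂), Law(Z₁+Z₂)) ≤ d_W(Law(W₁), Law(Z₁)) + E[d_W(Law(W₂ | G), Law(Z₂))]`,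
where `Law(W₂ | G)(ω)` is the pushforward under `W₂` of the conditional expectation kernel. -/
theorem wasserstein_conditional_lemma {Ω : Type*} [mΩ : MeasurableSpace Ω]
    [StandardBorelSpace Ω] (μ : Measure Ω) [IsProbabilityMeasure μ]
    (W₁ W₂ Z₁ Z₂ : Ω → ℝ)
    (hW₁m : Measurable W₁) (hW₂m : Measurable W₂)
    (hZ₁m : Measurable Z₁) (hZ₂m : Measurable Z₂)
    (hW₁ : Integrable W₁ μ) (hW₂ : Integrable W₂ μ)
    (hZ₁ : Integrable Z₁ μ) (hZ₂ : Integrable Z₂ μ)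
    (hindep : IndepFun Z₁ Z₂ μ)
    (G : MeasurableSpace Ω) (hG : G ≤ mΩ)
    (hW₁G : Measurable[G] W₁) :
    dW (@Measure.map Ω ℝ mΩ _ (fun ω => W₁ ω + W₂ ω) μ)
        (@Measure.map Ω ℝ mΩ _ (fun ω => Z₁ ω + Z₂ ω) μ) ≤
      dW (@Measure.map Ω ℝ mΩ _ W₁ μ) (@Measure.map Ω ℝ mΩ _ Z₁ μ) +
        ∫ ω, dW (@Measure.map Ω ℝ mΩ _ W₂ (condExpKernel (mΩ := mΩ) μ G ω))
          (@Measure.map Ω ℝ mΩ _ Z₂ μ) ∂μ :=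
  wasserstein_conditional_lemma_general (mΩ := mΩ) μ W₁ W₂ Z₁ Z₂ hW₂m hW₁ hW₂ hZ₁ hZ₂ hindep G hG
    hW₁G
end

section
/- Let ε > 0 and δ > 0 satisfy (1+5δ)·ε ≤ 1/2. Let f : ℕ → ℝ be a nonnegative sequence such that f(1) ≥ f(0)/2 and, for every k ≥ 1, f(k+1) ≥ (1−ε−δε)·f(k) − 2δε·f(k−1). Then for every k ≥ 1 one has f(k+1) ≥ (1−ε−5δε)·f(k); consequently, for every k ≥ 1, f(k) ≥ (1−ε−5δε)^{k−1}·f(1). -/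
/-- The inductive claim from the proof of Lemma 3.5: a nonnegative sequence satisfying a
two-step recursive lower bound `f(k+1) ≥ (1−ε−δε)f(k) − 2δε f(k−1)` for `k ≥ 1`, with base
case `f(1) ≥ f(0)/2`, satisfies `f(k+1) ≥ (1−ε−5δε)f(k)` for every `k ≥ 1`; consequently
`f(k) ≥ (1−ε−5δε)^{k−1} f(1)` for every `k ≥ 1`. -/
theorem recursive_lower_bound (ε δ : ℝ) (hε : 0 < ε) (hδ : 0 < δ)
    (hεδ : (1 + 5 * δ) * ε ≤ 1 / 2)
    (f : ℕ → ℝ) (hf : ∀ k, 0 ≤ f k) (hbase : f 0 / 2 ≤ f 1)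
    (hrec : ∀ k : ℕ, (1 - ε - δ * ε) * f (k + 1) - 2 * δ * ε * f k ≤ f (k + 2)) :
    (∀ k : ℕ, (1 - ε - 5 * δ * ε) * f (k + 1) ≤ f (k + 2)) ∧
    (∀ k : ℕ, (1 - ε - 5 * δ * ε) ^ k * f 1 ≤ f (k + 1)) := by
  have hr : (1 : ℝ) / 2 ≤ 1 - ε - 5 * δ * ε := by nlinarith
  have haux : ∀ k, f k ≤ 2 * f (k + 1) := by
    intro k
    induction k with
    | zero => linarith
    | succ n ih =>
      have h1 := hrec n
      have h2 : 0 ≤ δ * ε := by positivity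
      have h3 := hf (n + 1)
      nlinarith [mul_nonneg h2 (hf n)]
  refine ⟨?_, ?_⟩
  · intro k
    have h1 := hrec k
    have h2 : 0 ≤ δ * ε := by positivity
    nlinarith [haux k, hf (k + 1)]
  · intro k
    induction k with
    | zero => simp
    | succ n ih =>
      have h1 := hrec n
      have hr0 : (0 : ℝ) ≤ 1 - ε - 5 * δ * ε := by linarith
      calc (1 - ε - 5 * δ * ε) ^ (n + 1) * f 1
          = (1 - ε - 5 * δ * ε) * ((1 - ε - 5 * δ * ε) ^ n * f 1) := by ring
        _ ≤ (1 - ε - 5 * δ * ε) * f (n + 1) := by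
            exact mul_le_mul_of_nonneg_left ih hr0
        _ ≤ f (n + 2) := by
            have h2 : 0 ≤ δ * ε := by positivity
            nlinarith [haux n, hf (n + 1)]
end
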